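/- arXiv:1607.08297 — 7 statements merged into one kernel-verified Lean document; each statement's English description precedes it below -/
import Mathlib

section
/- Let Σ_X be a positive definite m×m real symmetric matrix, let D be symmetric with 0 ≺ D ≺ Σ_X, and let Θ be symmetric with 0 ⪯ Θ ⪯ Σ_X. Define Σ_S = (D⁻¹ − Σ_X⁻¹)⁻¹. Then det(Σ_X) / det(D·Σ_X⁻¹·(Σ_X − Θ) + Θ) = det(Σ_X + Σ_S) / det(Θ + Σ_S). -/
/-!
Write `A = D⁻¹ - Σ_X⁻¹`, so that `Σ_S = A⁻¹`. Then `D Σ_X⁻¹ (Σ_X - Θ) + Θ = D A (Θ + Σ_S)` and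
`Σ_X + Σ_S = Σ_S D⁻¹ Σ_X`, so both sides equal `det Σ_X / (det D · det A · det (Θ + Σ_S))`.
The only analytic input is that `A` is invertible: it is positive definite, being the sum
`A D A + Σ_X⁻¹ (Σ_X - D) Σ_X⁻¹` of a positive semidefinite and a positive definite matrix.
-/

open Matrix

namespace Matrix

variable {n K : Type*} [Fintype n] [DecidableEq n] [Field K] {S D T : Matrix n n K}

lemma inv_sub_inv_eq_mul_mul_add_mul_mul (hS : IsUnit S) (hD : IsUnit D) :
    D⁻¹ - S⁻¹ = (D⁻¹ - S⁻¹) * D * (D⁻¹ - S⁻¹) + S⁻¹ * (S - D) * S⁻¹ := by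
  have := hS.invertible; have := hD.invertible
  simp only [sub_mul, mul_sub, mul_inv_of_invertible, inv_mul_of_invertible, mul_assoc, mul_one,
    one_mul]
  abel

lemma PosDef.inv_sub_inv [PartialOrder K] [StarRing K] [StarOrderedRing K] (hS : S.PosDef)
    (hD : D.PosDef) (hSD : (S - D).PosDef) : (D⁻¹ - S⁻¹).PosDef := by
  have hS_inv_inj : Function.Injective S⁻¹.mulVec :=
    mulVec_injective_iff_isUnit.mpr (isUnit_nonsing_inv_iff.mpr hS.isUnit)
  have h := PosDef.posSemidef_add (hD.posSemidef.conjTranspose_mul_mul_same (D⁻¹ - S⁻¹))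
    (hSD.conjTranspose_mul_mul_same hS_inv_inj)
  rwa [(hD.isHermitian.inv.sub hS.isHermitian.inv).eq, hS.isHermitian.inv.eq,
    ← inv_sub_inv_eq_mul_mul_add_mul_mul hS.isUnit hD.isUnit] at h

lemma mul_inv_mul_sub_add_eq (hS : IsUnit S) (hD : IsUnit D) (hA : IsUnit (D⁻¹ - S⁻¹)) :
    D * S⁻¹ * (S - T) + T = D * (D⁻¹ - S⁻¹) * (T + (D⁻¹ - S⁻¹)⁻¹) := by
  have := hS.invertible; have := hD.invertible; have := hA.invertible
  rw [mul_add, mul_assoc D _ (D⁻¹ - S⁻¹)⁻¹, mul_inv_of_invertible]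
  simp only [sub_mul, mul_sub, mul_inv_of_invertible, inv_mul_of_invertible, mul_assoc, mul_one,
    one_mul]
  abel

lemma add_inv_inv_sub_inv_eq (hS : IsUnit S) (hA : IsUnit (D⁻¹ - S⁻¹)) :
    S + (D⁻¹ - S⁻¹)⁻¹ = (D⁻¹ - S⁻¹)⁻¹ * D⁻¹ * S := by
  have := hS.invertible; have := hA.invertible
  calc S + (D⁻¹ - S⁻¹)⁻¹ = (D⁻¹ - S⁻¹)⁻¹ * ((D⁻¹ - S⁻¹) * S + 1) := by
        rw [mul_add, ← mul_assoc, inv_mul_of_invertible, one_mul, mul_one]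
    _ = (D⁻¹ - S⁻¹)⁻¹ * D⁻¹ * S := by
        rw [sub_mul, inv_mul_of_invertible, sub_add_cancel, mul_assoc]

end Matrix

theorem stmt0_general {m : ℕ} (SX D Th : Matrix (Fin m) (Fin m) ℝ)
    (hX : SX.PosDef) (hD : D.PosDef) (hXD : (SX - D).PosDef) :
    SX.det / (D * SX⁻¹ * (SX - Th) + Th).det
      = (SX + (D⁻¹ - SX⁻¹)⁻¹).det / (Th + (D⁻¹ - SX⁻¹)⁻¹).det := by
  have hA := (hX.inv_sub_inv hD hXD).isUnit
  rw [mul_inv_mul_sub_add_eq hX.isUnit hD.isUnit hA, add_inv_inv_sub_inv_eq hX.isUnit hA]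
  simp only [det_mul, det_nonsing_inv, Ring.inverse_eq_inv]
  ring

/-- For `0 ≺ D ≺ Σ_X`, `0 ⪯ Θ ⪯ Σ_X` and `Σ_S = (D⁻¹ − Σ_X⁻¹)⁻¹`,
`det Σ_X / det(D·Σ_X⁻¹·(Σ_X − Θ) + Θ) = det(Σ_X + Σ_S)/det(Θ + Σ_S)`. -/
theorem stmt0 {m : ℕ} (SX D Th : Matrix (Fin m) (Fin m) ℝ)
    (hX : SX.PosDef) (hD : D.PosDef) (hXD : (SX - D).PosDef)
    (hTh : Th.PosSemidef) (hXTh : (SX - Th).PosSemidef) :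
    SX.det / (D * SX⁻¹ * (SX - Th) + Th).det
      = (SX + (D⁻¹ - SX⁻¹)⁻¹).det / (Th + (D⁻¹ - SX⁻¹)⁻¹).det :=
  stmt0_general SX D Th hX hD hXD
end

section
/- Let Σ_X and Σ_N be positive definite m×m symmetric matrices and D a symmetric matrix with 0 ≺ D ⪯ Σ_X. Define Θ = (Σ_X⁻¹ + Σ_N⁻¹)⁻¹. Then det(D + Σ_N) / det(Σ_X + Σ_N) = det(D·Σ_X⁻¹·(Σ_X − Θ) + Θ) / det(Σ_X), i.e. (1/2)log(det(Σ_X)·det(D+Σ_N)/(det(D)·det(Σ_X+Σ_N))) = (1/2)log(det(Σ_X)·det(D·Σ_X⁻¹·(Σ_X−Θ)+Θ)/(det(D)·det(Σ_X))) after the substitution Θ = (Σ_X⁻¹+Σ_N⁻¹)⁻¹. -/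
open Matrix

namespace Matrix

variable {n α : Type*} [Fintype n] [DecidableEq n]

section CommRing

variable [CommRing α] {A B : Matrix n n α}

theorem inv_add_inv_inv_eq (hA : IsUnit A.det) (hB : IsUnit B.det) :
    (A⁻¹ + B⁻¹)⁻¹ = B * (A + B)⁻¹ * A := by
  have hsum : A⁻¹ + B⁻¹ = A⁻¹ * (A + B) * B⁻¹ := by
    rw [Matrix.mul_add, Matrix.add_mul, nonsing_inv_mul _ hA, Matrix.one_mul, Matrix.mul_assoc,
      mul_nonsing_inv _ hB, Matrix.mul_one, add_comm]
  rw [hsum, Matrix.mul_inv_rev, Matrix.mul_inv_rev, nonsing_inv_nonsing_inv _ hB,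
    nonsing_inv_nonsing_inv _ hA, Matrix.mul_assoc]

theorem sub_inv_add_inv_inv_eq (hA : IsUnit A.det) (hB : IsUnit B.det)
    (hAB : IsUnit (A + B).det) : A - (A⁻¹ + B⁻¹)⁻¹ = A * (A + B)⁻¹ * A := by
  calc A - (A⁻¹ + B⁻¹)⁻¹ = (A + B) * (A + B)⁻¹ * A - B * (A + B)⁻¹ * A := by
        rw [mul_nonsing_inv _ hAB, Matrix.one_mul, inv_add_inv_inv_eq hA hB]
    _ = A * (A + B)⁻¹ * A := by rw [Matrix.add_mul, Matrix.add_mul, add_sub_cancel_right]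

theorem mul_inv_mul_sub_inv_add_inv_inv_add_eq (D : Matrix n n α) (hA : IsUnit A.det)
    (hB : IsUnit B.det) (hAB : IsUnit (A + B).det) :
    D * A⁻¹ * (A - (A⁻¹ + B⁻¹)⁻¹) + (A⁻¹ + B⁻¹)⁻¹ = (D + B) * (A + B)⁻¹ * A := by
  rw [sub_inv_add_inv_inv_eq hA hB hAB, inv_add_inv_inv_eq hA hB,
    show D * A⁻¹ * (A * (A + B)⁻¹ * A) = D * (A⁻¹ * A) * ((A + B)⁻¹ * A) by noncomm_ring,
    nonsing_inv_mul _ hA, Matrix.mul_one, Matrix.add_mul, Matrix.add_mul, Matrix.mul_assoc,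
    Matrix.mul_assoc]

end CommRing

theorem det_add_div_det_add_eq [Field α] (D : Matrix n n α) {A B : Matrix n n α}
    (hA : A.det ≠ 0) (hB : B.det ≠ 0) (hAB : (A + B).det ≠ 0) :
    (D + B).det / (A + B).det
      = (D * A⁻¹ * (A - (A⁻¹ + B⁻¹)⁻¹) + (A⁻¹ + B⁻¹)⁻¹).det / A.det := by
  rw [mul_inv_mul_sub_inv_add_inv_inv_add_eq D hA.isUnit hB.isUnit hAB.isUnit, det_mul, det_mul,
    det_nonsing_inv, Ring.inverse_eq_inv', mul_div_cancel_right₀ _ hA, div_eq_mul_inv]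

end Matrix

theorem stmt1_general {m : ℕ} (SX SN D : Matrix (Fin m) (Fin m) ℝ)
    (hX : SX.PosDef) (hN : SN.PosDef) :
    (D + SN).det / (SX + SN).det
      = (D * SX⁻¹ * (SX - (SX⁻¹ + SN⁻¹)⁻¹) + (SX⁻¹ + SN⁻¹)⁻¹).det / SX.det :=
  det_add_div_det_add_eq D hX.det_pos.ne' hN.det_pos.ne' (hX.add hN).det_pos.ne'

/-- For `Σ_X, Σ_N ≻ 0`, `0 ≺ D ⪯ Σ_X`, and `Θ = (Σ_X⁻¹ + Σ_N⁻¹)⁻¹`,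
`det(D + Σ_N)/det(Σ_X + Σ_N) = det(D·Σ_X⁻¹·(Σ_X − Θ) + Θ)/det Σ_X`. -/
theorem stmt1 {m : ℕ} (SX SN D : Matrix (Fin m) (Fin m) ℝ)
    (hX : SX.PosDef) (hN : SN.PosDef) (hD : D.PosDef) (hXD : (SX - D).PosSemidef) :
    (D + SN).det / (SX + SN).det
      = (D * SX⁻¹ * (SX - (SX⁻¹ + SN⁻¹)⁻¹) + (SX⁻¹ + SN⁻¹)⁻¹).det / SX.det :=
  stmt1_general SX SN D hX hN
end

section
/- Let Θ*_parent, Θ*_child, Σ_S be m×m symmetric matrices with Θ*_child + Σ_S invertible, and let M be symmetric with M·(Θ*_child − Θ*_parent) = (Θ*_child − Θ*_parent)·M = 0. Assume (Θ*_child + Σ_S)⁻¹ + M and (Θ*_parent + Σ_S)⁻¹ + M are invertible. Define Σ̃ = ((Θ*_child + Σ_S)⁻¹ + M)⁻¹ − Θ*_child. Then Θ*_parent + Σ̃ = ((Θ*_parent + Σ_S)⁻¹ + M)⁻¹. -/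
/-!
With `c = a⁻¹ + m`, the candidate `x = c⁻¹ + (b - a)` satisfies `x c = b a⁻¹` because
`(b - a) m = 0`, while `(b⁻¹ + m) b a⁻¹ = a⁻¹ + m a a⁻¹ = c` because `m b = m a`.
Hence `(b⁻¹ + m) x = 1`. Invertibility of `b` is forced: otherwise `b⁻¹ = 0`, so `m` is
invertible and `m (a - b) = 0` gives `b = a`.
-/

namespace Ring

variable {R : Type*} [Ring R] {a b m : R}

theorem isUnit_of_isUnit_inverse_add (ha : IsUnit a) (hbm : IsUnit (b⁻¹ʳ + m))
    (hab : m * (a - b) = 0) : IsUnit b := by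
  by_contra hb
  rw [inverse_non_unit b hb, zero_add] at hbm
  have : a = b := sub_eq_zero.mp <| hbm.mul_left_cancel <| by rw [hab, mul_zero]
  exact hb (this ▸ ha)

theorem inverse_inverse_add_add_sub (ha : IsUnit a) (hc : IsUnit (a⁻¹ʳ + m))
    (hbm : IsUnit (b⁻¹ʳ + m)) (hab : m * (a - b) = 0) (hba : (a - b) * m = 0) :
    (a⁻¹ʳ + m)⁻¹ʳ + (b - a) = (b⁻¹ʳ + m)⁻¹ʳ := by
  have hb := isUnit_of_isUnit_inverse_add ha hbm hab
  set c := a⁻¹ʳ + m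
  have hmb : m * b = m * a := (sub_eq_zero.mp (by rw [← mul_sub, hab])).symm
  have hbam : (b - a) * m = 0 := by rw [← neg_sub, neg_mul, hba, neg_zero]
  have hxc : (c⁻¹ʳ + (b - a)) * c = b * a⁻¹ʳ := by
    rw [add_mul, inverse_mul_cancel c hc, mul_add, hbam, add_zero, sub_mul,
      mul_inverse_cancel a ha]
    abel
  have hbc : (b⁻¹ʳ + m) * b * a⁻¹ʳ = c := by
    rw [add_mul, inverse_mul_cancel b hb, hmb, add_mul, one_mul, mul_assoc,
      mul_inverse_cancel a ha, mul_one]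
  refine ((inverse_mul_eq_iff_eq_mul _ _ _ hbm).mpr ?_).symm.trans (mul_one _)
  calc 1 = c * c⁻¹ʳ := (mul_inverse_cancel c hc).symm
    _ = (b⁻¹ʳ + m) * ((c⁻¹ʳ + (b - a)) * c) * c⁻¹ʳ := by rw [hxc, ← mul_assoc, hbc]
    _ = (b⁻¹ʳ + m) * (c⁻¹ʳ + (b - a)) := by rw [mul_assoc, mul_inverse_cancel_right c _ hc]

end Ring

open Matrix

theorem stmt4_general {m : ℕ} (Thp Thc SS M : Matrix (Fin m) (Fin m) ℝ)
    (hinvc : IsUnit (Thc + SS).det)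
    (hinv2c : IsUnit ((Thc + SS)⁻¹ + M).det)
    (hinv2p : IsUnit ((Thp + SS)⁻¹ + M).det)
    (hM1 : M * (Thc - Thp) = 0) (hM2 : (Thc - Thp) * M = 0) :
    Thp + (((Thc + SS)⁻¹ + M)⁻¹ - Thc) = ((Thp + SS)⁻¹ + M)⁻¹ := by
  have hshift : Thc - Thp = Thc + SS - (Thp + SS) := by abel
  rw [hshift] at hM1 hM2
  simp only [nonsing_inv_eq_ringInverse, ← isUnit_iff_isUnit_det] at hinvc hinv2c hinv2p ⊢
  rw [← Ring.inverse_inverse_add_add_sub hinvc hinv2c hinv2p hM1 hM2]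
  abel

/-- key enhancement identity, eq. (22): if
`M·(Θ*_c − Θ*_p) = (Θ*_c − Θ*_p)·M = 0` and `Σ̃ = ((Θ*_c + Σ_S)⁻¹ + M)⁻¹ − Θ*_c`,
then `Θ*_p + Σ̃ = ((Θ*_p + Σ_S)⁻¹ + M)⁻¹`. -/
theorem stmt4 {m : ℕ} (Thp Thc SS M : Matrix (Fin m) (Fin m) ℝ)
    (hThp : Thp.IsHermitian) (hThc : Thc.IsHermitian) (hSS : SS.IsHermitian)
    (hM : M.IsHermitian)
    (hinvc : IsUnit (Thc + SS).det)
    (hinv2c : IsUnit ((Thc + SS)⁻¹ + M).det)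
    (hinv2p : IsUnit ((Thp + SS)⁻¹ + M).det)
    (hM1 : M * (Thc - Thp) = 0) (hM2 : (Thc - Thp) * M = 0) :
    Thp + (((Thc + SS)⁻¹ + M)⁻¹ - Thc) = ((Thp + SS)⁻¹ + M)⁻¹ :=
  stmt4_general Thp Thc SS M hinvc hinv2c hinv2p hM1 hM2
end

section
/- Let Θ*, Σ_S be m×m symmetric matrices with Σ_S ≻ 0 and Θ* + Σ_S invertible, and let M be a positive semidefinite symmetric matrix satisfying M·Θ* = Θ*·M = 0. Assume (Θ* + Σ_S)⁻¹ + M is invertible. Then Σ̃ := ((Θ* + Σ_S)⁻¹ + M)⁻¹ − Θ* equals (Σ_S⁻¹ + M)⁻¹, and in particular Σ̃ ≻ 0. -/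
namespace Matrix

variable {n α : Type*} [Fintype n] [DecidableEq n] [CommRing α]

theorem mul_mul_inv_inv_add_eq_sub {S M : Matrix n n α} (hS : IsUnit S.det)
    (hB : IsUnit (S⁻¹ + M).det) : S * M * (S⁻¹ + M)⁻¹ = S - (S⁻¹ + M)⁻¹ := by
  have h : (1 + S * M) * (S⁻¹ + M)⁻¹ = S := by
    rw [← mul_nonsing_inv S hS, ← mul_add, mul_nonsing_inv_cancel_right _ _ hB]
  rw [add_mul, Matrix.one_mul] at h
  exact eq_sub_of_add_eq' h

theorem inv_inv_add_add_of_mul_eq_zero {T S M : Matrix n n α}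
    (hMT : M * T = 0) (hTM : T * M = 0)
    (hTS : IsUnit (T + S).det) (hS : IsUnit S.det) (hB : IsUnit (S⁻¹ + M).det) :
    ((T + S)⁻¹ + M)⁻¹ = (S⁻¹ + M)⁻¹ + T := by
  refine inv_eq_right_inv ?_
  -- `T M = 0` turns `(T + S) M` into `S M`, and `M T = 0` kills the cross term `S M T`.
  have hcancel : (T + S) * ((T + S)⁻¹ + M) * ((S⁻¹ + M)⁻¹ + T) = T + S := by
    rw [mul_add (T + S), mul_nonsing_inv _ hTS, add_mul T, hTM, zero_add, add_mul,
      Matrix.one_mul, mul_add (S * M), mul_mul_inv_inv_add_eq_sub hS hB, Matrix.mul_assoc, hMT,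
      Matrix.mul_zero]
    abel
  calc ((T + S)⁻¹ + M) * ((S⁻¹ + M)⁻¹ + T)
      = (T + S)⁻¹ * ((T + S) * ((T + S)⁻¹ + M) * ((S⁻¹ + M)⁻¹ + T)) := by
        rw [Matrix.mul_assoc (T + S), nonsing_inv_mul_cancel_left _ _ hTS]
    _ = 1 := by rw [hcancel, nonsing_inv_mul _ hTS]

end Matrix

theorem stmt5_general {m : ℕ} (Th SS M : Matrix (Fin m) (Fin m) ℝ)
    (hSS : SS.PosDef) (hM : M.PosSemidef)
    (hinv : IsUnit (Th + SS).det)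
    (hMTh : M * Th = 0) (hThM : Th * M = 0) :
    ((Th + SS)⁻¹ + M)⁻¹ - Th = (SS⁻¹ + M)⁻¹ ∧
      (((Th + SS)⁻¹ + M)⁻¹ - Th).PosDef := by
  have hB : (SS⁻¹ + M).PosDef := hSS.inv.add_posSemidef hM
  have heq : ((Th + SS)⁻¹ + M)⁻¹ - Th = (SS⁻¹ + M)⁻¹ := by
    rw [Matrix.inv_inv_add_add_of_mul_eq_zero hMTh hThM hinv hSS.det_pos.ne'.isUnit
      hB.det_pos.ne'.isUnit, add_sub_cancel_right]
  exact ⟨heq, heq ▸ hB.inv⟩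

/-- with `Σ_S ≻ 0`, `M ⪰ 0`, `M·Θ* = Θ*·M = 0`, the enhanced covariance
`Σ̃ = ((Θ* + Σ_S)⁻¹ + M)⁻¹ − Θ*` equals `(Σ_S⁻¹ + M)⁻¹` and is positive definite. -/
theorem stmt5 {m : ℕ} (Th SS M : Matrix (Fin m) (Fin m) ℝ)
    (hTh : Th.IsHermitian) (hSS : SS.PosDef) (hM : M.PosSemidef)
    (hinv : IsUnit (Th + SS).det)
    (hinv2 : IsUnit ((Th + SS)⁻¹ + M).det)
    (hMTh : M * Th = 0) (hThM : Th * M = 0) :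
    ((Th + SS)⁻¹ + M)⁻¹ - Th = (SS⁻¹ + M)⁻¹ ∧
      (((Th + SS)⁻¹ + M)⁻¹ - Th).PosDef :=
  stmt5_general Th SS M hSS hM hinv hMTh hThM
end

section
/- Let Θ*, Σ_S be m×m symmetric matrices with Θ* + Σ_S invertible, and let M be symmetric with M·Θ* = Θ*·M = 0. Set Σ̃ = ((Θ* + Σ_S)⁻¹ + M)⁻¹ − Θ* and assume Σ_S and Σ̃ are invertible. Then Σ̃⁻¹·(Θ* + Σ̃) = Σ_S⁻¹·(Θ* + Σ_S). -/
/-!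
Write `A = Θ* + Σ_S` and `B = A⁻¹ + M`, so that `Σ̃ = B⁻¹ - Θ*` and `Θ* + Σ̃ = B⁻¹`.
Since `M Θ* = 0`, `B Σ̃ = 1 - A⁻¹ Θ* = A⁻¹ Σ_S`; inverting this product gives
`Σ̃⁻¹ (Θ* + Σ̃) = (B Σ̃)⁻¹ = Σ_S⁻¹ A`.
-/

open Matrix

namespace Matrix

variable {n α : Type*} [Fintype n] [DecidableEq n] [CommRing α]

/- If `A⁻¹ + M` were singular, its junk inverse `0` would make `-Θ` invertible, and then
`M Θ = 0` forces `M = 0`, so `A⁻¹ + M = A⁻¹` is invertible after all. -/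
theorem isUnit_det_inv_add_of_isUnit_det_inv_add_sub {A Θ M : Matrix n n α}
    (hA : IsUnit A.det) (hMΘ : M * Θ = 0) (hT : IsUnit ((A⁻¹ + M)⁻¹ - Θ).det) :
    IsUnit (A⁻¹ + M).det := by
  by_contra hB
  rw [nonsing_inv_apply_not_isUnit _ hB, zero_sub, det_neg] at hT
  have hΘ : IsUnit Θ.det := (IsUnit.mul_iff.mp hT).2
  have hM : M = 0 := by
    rw [← Matrix.mul_one M, ← mul_nonsing_inv Θ hΘ, ← Matrix.mul_assoc, hMΘ, Matrix.zero_mul]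
  exact hB (by simpa [hM] using isUnit_nonsing_inv_det A hA)

theorem inv_add_mul_inv_add_sub {Θ S M : Matrix n n α} (hA : IsUnit (Θ + S).det)
    (hMΘ : M * Θ = 0) (hB : IsUnit ((Θ + S)⁻¹ + M).det) :
    ((Θ + S)⁻¹ + M) * (((Θ + S)⁻¹ + M)⁻¹ - Θ) = (Θ + S)⁻¹ * S := by
  rw [Matrix.mul_sub, mul_nonsing_inv _ hB, Matrix.add_mul, hMΘ, add_zero]
  calc 1 - (Θ + S)⁻¹ * Θ = (Θ + S)⁻¹ * (Θ + S) - (Θ + S)⁻¹ * Θ := by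
        rw [nonsing_inv_mul _ hA]
    _ = (Θ + S)⁻¹ * S := by rw [Matrix.mul_add, add_sub_cancel_left]

end Matrix

theorem stmt6_general {m : ℕ} (Th SS M : Matrix (Fin m) (Fin m) ℝ)
    (hinv : IsUnit (Th + SS).det)
    (hMTh : M * Th = 0)
    (hSt : IsUnit (((Th + SS)⁻¹ + M)⁻¹ - Th).det) :
    (((Th + SS)⁻¹ + M)⁻¹ - Th)⁻¹ * (Th + (((Th + SS)⁻¹ + M)⁻¹ - Th))
      = SS⁻¹ * (Th + SS) := by
  have hB := isUnit_det_inv_add_of_isUnit_det_inv_add_sub hinv hMTh hSt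
  rw [add_sub_cancel, ← Matrix.mul_inv_rev, inv_add_mul_inv_add_sub hinv hMTh hB,
    Matrix.mul_inv_rev, nonsing_inv_nonsing_inv _ hinv]

/-- property (26) of the enhancement lemma:
`Σ̃⁻¹·(Θ* + Σ̃) = Σ_S⁻¹·(Θ* + Σ_S)` where `Σ̃ = ((Θ* + Σ_S)⁻¹ + M)⁻¹ − Θ*`. -/
theorem stmt6 {m : ℕ} (Th SS M : Matrix (Fin m) (Fin m) ℝ)
    (hTh : Th.IsHermitian) (hSS : SS.IsHermitian) (hM : M.IsHermitian)
    (hinv : IsUnit (Th + SS).det)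
    (hMTh : M * Th = 0) (hThM : Th * M = 0)
    (hSSinv : IsUnit SS.det)
    (hSt : IsUnit (((Th + SS)⁻¹ + M)⁻¹ - Th).det) :
    (((Th + SS)⁻¹ + M)⁻¹ - Th)⁻¹ * (Th + (((Th + SS)⁻¹ + M)⁻¹ - Th))
      = SS⁻¹ * (Th + SS) :=
  stmt6_general Th SS M hinv hMTh hSt
end

section
/- Let Θ_p, Θ_c, Σ_S be m×m symmetric matrices with Θ_c + Σ_S and Θ_p + Σ_S invertible, and let M be symmetric with M·(Θ_c − Θ_p) = (Θ_c − Θ_p)·M = 0. Set Σ̃ = ((Θ_c + Σ_S)⁻¹ + M)⁻¹ − Θ_c and assume Θ_p + Σ̃ is invertible. Then (Θ_p + Σ̃)⁻¹·(Θ_c + Σ̃) = (Θ_p + Σ_S)⁻¹·(Θ_c + Σ_S). -/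
/-!
Write `A = Θ_c + Σ_S`, `D = Θ_c − Θ_p` and `N = (A⁻¹ + M)⁻¹`, so that `Θ_c + Σ̃ = N`,
`Θ_p + Σ̃ = N − D` and `Θ_p + Σ_S = A − D`. Since `N A⁻¹ = 1 − N M` and `M D = 0`,
`N − D = N A⁻¹ (A − D)`, whence `(N − D)⁻¹ N = (A − D)⁻¹ A N⁻¹ N = (A − D)⁻¹ A`.
-/

open Matrix

namespace Matrix

variable {n α : Type*} [Fintype n] [DecidableEq n] [CommRing α]

lemma sub_eq_mul_inv_mul_sub {A M D N : Matrix n n α} (hA : IsUnit A.det)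
    (hN : N * (A⁻¹ + M) = 1) (hMD : M * D = 0) : N - D = N * A⁻¹ * (A - D) := by
  have hNA : N * A⁻¹ = 1 - N * M := eq_sub_of_add_eq (by rw [← mul_add, hN])
  calc N - D = N - (1 - N * M) * D := by rw [sub_mul, one_mul, mul_assoc, hMD, mul_zero, sub_zero]
    _ = N * (A⁻¹ * A) - N * A⁻¹ * D := by rw [nonsing_inv_mul _ hA, mul_one, hNA]
    _ = N * A⁻¹ * (A - D) := by noncomm_ring

/-- If `A⁻¹ + M` were singular, its `nonsing_inv` would be `0`, making `D` invertible and
hence `M = 0`, so `A⁻¹ + M = A⁻¹` would be invertible after all. -/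
lemma isUnit_det_inv_add {A M D : Matrix n n α} (hA : IsUnit A.det) (hMD : M * D = 0)
    (h : IsUnit ((A⁻¹ + M)⁻¹ - D).det) : IsUnit (A⁻¹ + M).det := by
  by_contra hU
  rw [nonsing_inv_apply_not_isUnit _ hU, zero_sub, det_neg] at h
  have hD : IsUnit D.det := isUnit_of_mul_isUnit_right h
  have hM : M = 0 := by
    rw [← mul_one M, ← mul_nonsing_inv D hD, ← mul_assoc, hMD, zero_mul]
  exact hU (by rw [hM, add_zero]; exact isUnit_nonsing_inv_det A hA)

theorem inv_sub_mul_inv_inv_add {A M D : Matrix n n α} (hA : IsUnit A.det) (hMD : M * D = 0)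
    (h : IsUnit ((A⁻¹ + M)⁻¹ - D).det) :
    ((A⁻¹ + M)⁻¹ - D)⁻¹ * (A⁻¹ + M)⁻¹ = (A - D)⁻¹ * A := by
  have hU := isUnit_det_inv_add hA hMD h
  rw [sub_eq_mul_inv_mul_sub hA (nonsing_inv_mul _ hU) hMD, mul_inv_rev, mul_inv_rev,
    nonsing_inv_nonsing_inv _ hA, mul_assoc, mul_assoc,
    nonsing_inv_mul _ (isUnit_nonsing_inv_det _ hU), mul_one]

end Matrix

theorem stmt7_general {m : ℕ} (Thp Thc SS M : Matrix (Fin m) (Fin m) ℝ)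
    (hinvc : IsUnit (Thc + SS).det)
    (hM1 : M * (Thc - Thp) = 0)
    (hinvt : IsUnit (Thp + (((Thc + SS)⁻¹ + M)⁻¹ - Thc)).det) :
    (Thp + (((Thc + SS)⁻¹ + M)⁻¹ - Thc))⁻¹ * (Thc + (((Thc + SS)⁻¹ + M)⁻¹ - Thc))
      = (Thp + SS)⁻¹ * (Thc + SS) := by
  have hp (X : Matrix (Fin m) (Fin m) ℝ) : Thp + (X - Thc) = X - (Thc - Thp) := by abel
  have hc (X : Matrix (Fin m) (Fin m) ℝ) : Thc + (X - Thc) = X := by abel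
  have hB : Thp + SS = Thc + SS - (Thc - Thp) := by abel
  rw [hp] at hinvt
  rw [hp, hc, hB]
  exact inv_sub_mul_inv_inv_add hinvc hM1 hinvt

/-- properties (27)/(28) of the enhancement lemma:
`(Θ_p + Σ̃)⁻¹·(Θ_c + Σ̃) = (Θ_p + Σ_S)⁻¹·(Θ_c + Σ_S)` where
`Σ̃ = ((Θ_c + Σ_S)⁻¹ + M)⁻¹ − Θ_c`. -/
theorem stmt7 {m : ℕ} (Thp Thc SS M : Matrix (Fin m) (Fin m) ℝ)
    (hThp : Thp.IsHermitian) (hThc : Thc.IsHermitian) (hSS : SS.IsHermitian)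
    (hM : M.IsHermitian)
    (hinvc : IsUnit (Thc + SS).det) (hinvp : IsUnit (Thp + SS).det)
    (hM1 : M * (Thc - Thp) = 0) (hM2 : (Thc - Thp) * M = 0)
    (hinvt : IsUnit (Thp + (((Thc + SS)⁻¹ + M)⁻¹ - Thc)).det) :
    (Thp + (((Thc + SS)⁻¹ + M)⁻¹ - Thc))⁻¹ * (Thc + (((Thc + SS)⁻¹ + M)⁻¹ - Thc))
      = (Thp + SS)⁻¹ * (Thc + SS) :=
  stmt7_general Thp Thc SS M hinvc hM1 hinvt
end

section
/- Let Γ be a 2m×2m positive definite symmetric block matrix with m×m blocks, let Σ̃₀ be symmetric m×m with Σ̃₀⁻¹ = (I,I)·Γ⁻¹·(I,I)ᵀ, let Λ = Γ − [[Σ̃₀, Σ̃₀],[Σ̃₀, Σ̃₀]], and define (H₁, H₂) = (Σ̃₀, Σ̃₀)·Γ⁻¹. Then (H₁, H₂)·Λ·(H₁, H₂)ᵀ = 0. -/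
/-!
Write `E = (I, I)`, so that `(Σ̃₀, Σ̃₀) = Σ̃₀ E` and `[[Σ̃₀, Σ̃₀],[Σ̃₀, Σ̃₀]] = Eᵀ Σ̃₀ E`.
Then `(H₁, H₂) Λ = Σ̃₀ E Γ⁻¹ Γ - Σ̃₀ (E Γ⁻¹ Eᵀ) Σ̃₀ E = Σ̃₀ E - Σ̃₀ E = 0` already, because
`Σ̃₀ (E Γ⁻¹ Eᵀ) = Σ̃₀ Σ̃₀⁻¹ = 1`. The only analytic input is that `Σ̃₀` is invertible: otherwise
its inverse would be the junk value `0`, while `E Γ⁻¹ Eᵀ` is positive definite since `E` has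
full row rank.
-/

open Matrix

namespace Matrix

variable {R : Type*} [CommRing R] {k n : Type*} [Fintype k] [DecidableEq k] [Fintype n]
  [DecidableEq n]

theorem mul_mul_nonsing_inv_mul_sub_mul_mul_eq_zero (S : Matrix k k R) (E : Matrix k n R)
    (F : Matrix n k R) {G : Matrix n n R} (hG : IsUnit G.det) (hS : S * (E * G⁻¹ * F) = 1) :
    S * E * G⁻¹ * (G - F * S * E) = 0 := by
  have hcancel : S * E * G⁻¹ * G = S * E := by
    rw [Matrix.mul_assoc _ G⁻¹, nonsing_inv_mul G hG, Matrix.mul_one]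
  have hproj : S * E * G⁻¹ * (F * S * E) = S * E := by
    calc S * E * G⁻¹ * (F * S * E) = S * (E * G⁻¹ * F) * S * E := by
          simp only [Matrix.mul_assoc]
      _ = S * E := by rw [hS, Matrix.one_mul]
  rw [Matrix.mul_sub, hcancel, hproj, sub_self]

theorem fromCols_self_eq_mul_fromCols_one_one (S : Matrix n n R) :
    fromCols S S = S * fromCols (1 : Matrix n n R) (1 : Matrix n n R) := by
  rw [mul_fromCols, Matrix.mul_one]

theorem fromBlocks_self_eq_fromRows_one_one_mul_mul_fromCols_one_one (S : Matrix n n R) :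
    fromBlocks S S S S = fromRows (1 : Matrix n n R) (1 : Matrix n n R) * S
      * fromCols (1 : Matrix n n R) (1 : Matrix n n R) := by
  rw [fromRows_mul, Matrix.one_mul, fromRows_mul_fromCols, Matrix.mul_one]

theorem vecMul_fromCols_one_one_injective :
    Function.Injective fun v : n → R ↦ v ᵥ* fromCols (1 : Matrix n n R) (1 : Matrix n n R) := by
  intro v w h
  simpa only [vecMul_fromCols, vecMul_one, Sum.elim_eq_iff, and_self] using h

theorem PosDef.fromCols_one_one_mul_mul_transpose {A : Matrix (n ⊕ n) (n ⊕ n) ℝ} (hA : A.PosDef) :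
    (fromCols (1 : Matrix n n ℝ) (1 : Matrix n n ℝ) * A
      * (fromCols (1 : Matrix n n ℝ) (1 : Matrix n n ℝ))ᵀ).PosDef := by
  simpa only [conjTranspose_eq_transpose_of_trivial] using
    hA.mul_mul_conjTranspose_same vecMul_fromCols_one_one_injective

end Matrix

theorem stmt11_general {m : ℕ} (G : Matrix (Fin m ⊕ Fin m) (Fin m ⊕ Fin m) ℝ)
    (S0 : Matrix (Fin m) (Fin m) ℝ)
    (hG : G.PosDef)
    (hS0inv : S0⁻¹ = fromCols (1 : Matrix (Fin m) (Fin m) ℝ) (1 : Matrix (Fin m) (Fin m) ℝ) * G⁻¹ * (fromCols (1 : Matrix (Fin m) (Fin m) ℝ) (1 : Matrix (Fin m) (Fin m) ℝ))ᵀ) :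
    fromCols (toCols₁ (fromCols S0 S0 * G⁻¹)) (toCols₂ (fromCols S0 S0 * G⁻¹))
        * (G - fromBlocks S0 S0 S0 S0)
        * (fromCols (toCols₁ (fromCols S0 S0 * G⁻¹))
            (toCols₂ (fromCols S0 S0 * G⁻¹)))ᵀ
      = 0 := by
  have hS0 : IsUnit S0.det := (isUnit_iff_isUnit_det S0).1 <| isUnit_nonsing_inv_iff.1 <|
    hS0inv ▸ hG.inv.fromCols_one_one_mul_mul_transpose.isUnit
  have hS0_mul := mul_nonsing_inv S0 hS0
  rw [hS0inv, transpose_fromCols, transpose_one] at hS0_mul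
  rw [fromCols_toCols, fromCols_self_eq_mul_fromCols_one_one,
    fromBlocks_self_eq_fromRows_one_one_mul_mul_fromCols_one_one,
    mul_mul_nonsing_inv_mul_sub_mul_mul_eq_zero _ _ _ ((isUnit_iff_isUnit_det G).1 hG.isUnit)
      hS0_mul, Matrix.zero_mul]

/-- second part of Lemma 4: with `Γ ≻ 0`,
`Σ̃₀⁻¹ = (I,I)·Γ⁻¹·(I,I)ᵀ`, `Λ = Γ − [[Σ̃₀, Σ̃₀],[Σ̃₀, Σ̃₀]]`, and
`(H₁, H₂) = (Σ̃₀, Σ̃₀)·Γ⁻¹`, we have `(H₁, H₂)·Λ·(H₁, H₂)ᵀ = 0`. -/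
theorem stmt11 {m : ℕ} (G : Matrix (Fin m ⊕ Fin m) (Fin m ⊕ Fin m) ℝ)
    (S0 : Matrix (Fin m) (Fin m) ℝ)
    (hG : G.PosDef) (hS0 : S0.IsHermitian)
    (hS0inv : S0⁻¹ = fromCols (1 : Matrix (Fin m) (Fin m) ℝ) (1 : Matrix (Fin m) (Fin m) ℝ) * G⁻¹ * (fromCols (1 : Matrix (Fin m) (Fin m) ℝ) (1 : Matrix (Fin m) (Fin m) ℝ))ᵀ) :
    fromCols (toCols₁ (fromCols S0 S0 * G⁻¹)) (toCols₂ (fromCols S0 S0 * G⁻¹))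
        * (G - fromBlocks S0 S0 S0 S0)
        * (fromCols (toCols₁ (fromCols S0 S0 * G⁻¹))
            (toCols₂ (fromCols S0 S0 * G⁻¹)))ᵀ
      = 0 :=
  stmt11_general G S0 hG hS0inv
end
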